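/- arXiv:0807.0454 — 4 statements merged into one kernel-verified Lean document; each statement's English description precedes it below -/
import Mathlib

section
/- For k1 ≥ k2 > 0 and k3 = -k1*k2/(k1+k2), the three numbers k1/(k1+k2), (k2 - sqrt(k1²+k1k2+k2²))/(k1+k2), and (k2 + sqrt(k1²+k1k2+k2²))/(k1+k2) are exactly the roots of the cubic f(ν) = (k1+k2)ν³ - (k1+2k2)ν² - (k1+2k3)ν + (k1+k3), i.e., f factors as (k1+k2) times the product of (ν - r) over these three values r. -/
/-! The root `k1/(k1+k2)` comes from `k3 (k1+k2) = -k1 k2`; dividing it out leaves a quadratic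
whose discriminant is `4 (k1² + k1 k2 + k2²)`, so the other two roots are `(k2 ± d)/(k1+k2)`
for any square root `d` of `k1² + k1 k2 + k2²`. -/

theorem collinear_cubic_eq_mul_prod {K : Type*} [Field K] {k1 k2 k3 d : K}
    (hs : k1 + k2 ≠ 0) (hk3 : k3 * (k1 + k2) = -(k1 * k2)) (hd : d ^ 2 = k1 ^ 2 + k1 * k2 + k2 ^ 2)
    (ν : K) :
    (k1 + k2) * ν ^ 3 - (k1 + 2 * k2) * ν ^ 2 - (k1 + 2 * k3) * ν + (k1 + k3)
      = (k1 + k2) * (ν - k1 / (k1 + k2)) * (ν - (k2 - d) / (k1 + k2))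
        * (ν - (k2 + d) / (k1 + k2)) := by
  have hk3' : k3 = -(k1 * k2) / (k1 + k2) := eq_div_of_mul_eq hs hk3
  subst hk3'
  field_simp
  linear_combination ((k1 + k2) * ν - k1) * hd

theorem cubic_factorization (k1 k2 k3 : ℝ)
    (h12 : k1 ≥ k2) (h2 : k2 > 0)
    (h3 : k3 = -k1 * k2 / (k1 + k2)) :
    ∀ ν : ℝ,
      (k1 + k2) * ν^3 - (k1 + 2*k2) * ν^2 - (k1 + 2*k3) * ν + (k1 + k3)
        = (k1 + k2) * (ν - k1 / (k1 + k2))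
          * (ν - (k2 - Real.sqrt (k1^2 + k1*k2 + k2^2)) / (k1 + k2))
          * (ν - (k2 + Real.sqrt (k1^2 + k1*k2 + k2^2)) / (k1 + k2)) := by
  have hs : k1 + k2 ≠ 0 := by linarith
  have hk3 : k3 * (k1 + k2) = -(k1 * k2) := by rw [h3, div_mul_cancel₀ _ hs, neg_mul]
  have hdisc : 0 ≤ k1 ^ 2 + k1 * k2 + k2 ^ 2 := by
    nlinarith [sq_nonneg (k1 + k2), sq_nonneg k1, sq_nonneg k2]
  exact collinear_cubic_eq_mul_prod hs hk3 (Real.sq_sqrt hdisc)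
end

section
/- For all ν with 0 < ν < 1, one has (2 - ν²)·ν/(1 - ν²) > ln((1+ν)/(1-ν)). -/
/-!
Compare power series in odd powers of `ν`: `log ((1 + ν) / (1 - ν)) = ∑ 2 ν^(2k+1) / (2k+1)`,
while `(2 - ν²) ν / (1 - ν²) = ν + ∑ ν^(2k+1)`. The coefficients agree for `k = 0`, and for
`k ≥ 1` the logarithmic ones, `2 / (2k+1) < 1`, are strictly smaller.
-/

open Real

lemma odd_pow_eq_mul_sq_pow (x : ℝ) (k : ℕ) : x ^ (2 * k + 1) = x * (x ^ 2) ^ k := by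
  rw [pow_succ, pow_mul, mul_comm]

lemma hasSum_mul_sq_pow {x : ℝ} (hx : |x| < 1) :
    HasSum (fun k : ℕ => x * (x ^ 2) ^ k) (x / (1 - x ^ 2)) := by
  have hx2 : |x ^ 2| < 1 := by rw [abs_pow]; exact pow_lt_one₀ (abs_nonneg x) hx two_ne_zero
  simpa [div_eq_mul_inv] using (hasSum_geometric_of_abs_lt_one hx2).mul_left x

lemma log_one_add_sub_log_one_sub_lt {x : ℝ} (h0 : 0 < x) (h1 : x < 1) :
    log (1 + x) - log (1 - x) < x / (1 - x ^ 2) + x := by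
  have hx : |x| < 1 := abs_lt.mpr ⟨by linarith, h1⟩
  have hle : ∀ k : ℕ, 2 * (1 / (2 * k + 1)) * x ^ (2 * k + 1)
      ≤ x * (x ^ 2) ^ k + if k = 0 then x else 0 := by
    rintro (_ | k)
    · norm_num [two_mul]
    · have hcoef : 2 * (1 / (2 * ((k + 1 : ℕ) : ℝ) + 1)) ≤ 1 := by
        rw [mul_one_div, div_le_one (by positivity)]; push_cast; linarith [k.cast_nonneg (α := ℝ)]
      rw [odd_pow_eq_mul_sq_pow, if_neg k.succ_ne_zero, add_zero]
      exact mul_le_of_le_one_left (by positivity) hcoef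
  refine hasSum_lt hle ?_ (hasSum_log_sub_log_of_abs_lt_one hx)
    ((hasSum_mul_sq_pow hx).add (hasSum_ite_eq 0 x)) (i := 1)
  have hx3 : 0 < x ^ 3 := pow_pos h0 3
  norm_num
  linarith

theorem log_inequality (ν : ℝ) (h0 : 0 < ν) (h1 : ν < 1) :
    (2 - ν^2) * ν / (1 - ν^2) > Real.log ((1 + ν) / (1 - ν)) := by
  have hsq : 1 - ν ^ 2 ≠ 0 := by nlinarith
  rw [log_div (by linarith) (by linarith)]
  calc log (1 + ν) - log (1 - ν) < ν / (1 - ν ^ 2) + ν := log_one_add_sub_log_one_sub_lt h0 h1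
    _ = (2 - ν ^ 2) * ν / (1 - ν ^ 2) := by field_simp; ring
end

section
/- For 0 < ν < 1 and any real k ≥ 1, the expression -ln((1+ν)/(1-ν)) + (2-ν²)ν/(1-ν²) + (k²-1)ν³/(1-ν²) is positive. -/
/-!
The term in `k` is nonnegative, so everything rests on
`log ((1 + t) / (1 - t)) < (2 - t²) t / (1 - t²)` for `0 < t < 1`. The difference of the two sides
vanishes at `t = 0` and has derivative `t² (1 + t²) / (1 - t²)² > 0`, hence is positive.
-/

open Real Set

noncomputable def logRatioGap (t : ℝ) : ℝ :=
  (2 - t ^ 2) * t / (1 - t ^ 2) - (log (1 + t) - log (1 - t))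

lemma hasDerivAt_logRatioGap {x : ℝ} (hx₀ : -1 < x) (hx₁ : x < 1) :
    HasDerivAt logRatioGap (x ^ 2 * (1 + x ^ 2) / (1 - x ^ 2) ^ 2) x := by
  have hp : 0 < 1 + x := by linarith
  have hm : 0 < 1 - x := by linarith
  have hd : 1 - x ^ 2 ≠ 0 := by nlinarith
  have hlogp : HasDerivAt (fun t ↦ log (1 + t)) (1 / (1 + x)) x := by
    simpa using ((hasDerivAt_id x).const_add 1).log hp.ne'
  have hlogm : HasDerivAt (fun t ↦ log (1 - t)) (-1 / (1 - x)) x := by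
    simpa using ((hasDerivAt_id x).const_sub 1).log hm.ne'
  have hnum : HasDerivAt (fun t : ℝ ↦ (2 - t ^ 2) * t) (2 - 3 * x ^ 2) x := by
    refine (((hasDerivAt_pow 2 x).const_sub 2).mul (hasDerivAt_id' x)).congr_deriv ?_
    push_cast
    ring
  have hden : HasDerivAt (fun t : ℝ ↦ 1 - t ^ 2) (-(2 * x)) x := by
    simpa using (hasDerivAt_pow 2 x).const_sub 1
  refine ((hnum.div hden hd).sub (hlogp.sub hlogm)).congr_deriv ?_
  field_simp
  ring

lemma strictMonoOn_logRatioGap : StrictMonoOn logRatioGap (Ico 0 1) := by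
  apply strictMonoOn_of_deriv_pos (convex_Ico 0 1)
  · intro x hx
    exact (hasDerivAt_logRatioGap (by linarith [hx.1]) hx.2).continuousAt.continuousWithinAt
  · rw [interior_Ico]
    intro x ⟨hx₀, hx₁⟩
    rw [(hasDerivAt_logRatioGap (by linarith) hx₁).deriv]
    have hd : 0 < 1 - x ^ 2 := by nlinarith
    positivity

lemma log_one_add_div_one_sub_lt {t : ℝ} (h₀ : 0 < t) (h₁ : t < 1) :
    log ((1 + t) / (1 - t)) < (2 - t ^ 2) * t / (1 - t ^ 2) := by
  have hgap : logRatioGap 0 < logRatioGap t :=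
    strictMonoOn_logRatioGap ⟨le_rfl, zero_lt_one⟩ ⟨h₀.le, h₁⟩ h₀
  rw [log_div (by linarith) (by linarith)]
  simpa [logRatioGap] using hgap

theorem dlogf_positive (ν k : ℝ) (h0 : 0 < ν) (h1 : ν < 1) (hk : 1 ≤ k) :
    0 < -Real.log ((1 + ν) / (1 - ν)) + (2 - ν^2) * ν / (1 - ν^2)
        + (k^2 - 1) * ν^3 / (1 - ν^2) := by
  have hlog := log_one_add_div_one_sub_lt h0 h1
  have hk2 : 0 ≤ k ^ 2 - 1 := by nlinarith
  have hd : 0 < 1 - ν ^ 2 := by nlinarith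
  have htail : 0 ≤ (k ^ 2 - 1) * ν ^ 3 / (1 - ν ^ 2) := by positivity
  linarith
end

section
/- Define q(k) = sqrt(k² + k + 1) and f(k) = ((q(k)-1)/(q(k)+1))^k · (q(k)+k)/(q(k)-k) for k ≥ 1. Then f(1) = 1 and f is strictly increasing on (1, ∞); in particular f(k) > 1 for all k > 1. -/
/-!
Write `q = √(k² + k + 1)`, so that `q² - 1 = k(k + 1)` and `q² - k² = k + 1`. For `k > 0` the ratio
is `exp G(k)` with `G(k) = k log((q - 1)/(q + 1)) + log((q + k)/(q - k))`, and differentiating gives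
`G'(k) = 3/q - log((q + 1)/(q - 1))`. Since `log y ≤ sinh (log y) = (y - y⁻¹)/2` for `y ≥ 1`, the
logarithm is at most `2q/(q² - 1)`, which is less than `3/q` as soon as `q² > 3`, i.e. `k > 1`.
So `G`, hence the ratio, is strictly increasing on `[1, ∞)`, and at `k = 1` the two factors cancel.
-/

open Real

lemma Real.log_le_half_sub_inv {y : ℝ} (hy : 1 ≤ y) : log y ≤ (y - y⁻¹) / 2 := by
  rw [← sinh_log (by linarith)]
  exact self_le_sinh_iff.2 (log_nonneg hy)

lemma Real.log_add_one_sub_log_sub_one_lt {q : ℝ} (hq0 : 0 < q) (hq : 3 < q ^ 2) :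
    log (q + 1) - log (q - 1) < 3 / q := by
  have hq1 : 1 < q := by nlinarith
  have hy : 1 ≤ (q + 1) / (q - 1) := by rw [le_div_iff₀ (by linarith)]; linarith
  calc log (q + 1) - log (q - 1) = log ((q + 1) / (q - 1)) :=
        (log_div (by linarith) (by linarith)).symm
    _ ≤ ((q + 1) / (q - 1) - ((q + 1) / (q - 1))⁻¹) / 2 := log_le_half_sub_inv hy
    _ = 2 * q / (q ^ 2 - 1) := by
        have : q - 1 ≠ 0 := by linarith
        have : q + 1 ≠ 0 := by linarith
        have : q ^ 2 - 1 ≠ 0 := by nlinarith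
        field_simp
        ring
    _ < 3 / q := by
        rw [div_lt_div_iff₀ (by nlinarith) hq0]
        nlinarith

namespace InvariantRatio

noncomputable def q (k : ℝ) : ℝ := √(k ^ 2 + k + 1)

noncomputable def logRatio (k : ℝ) : ℝ :=
  k * (log (q k - 1) - log (q k + 1)) + (log (q k + k) - log (q k - k))

variable {k : ℝ}

lemma q_sq (hk : 0 < k) : q k ^ 2 = k ^ 2 + k + 1 := sq_sqrt (by positivity)

lemma q_pos (hk : 0 < k) : 0 < q k := sqrt_pos.2 (by positivity)

lemma one_lt_q (hk : 0 < k) : 1 < q k := by nlinarith [q_sq hk, q_pos hk]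

lemma lt_q (hk : 0 < k) : k < q k := by nlinarith [q_sq hk, q_pos hk]

lemma hasDerivAt_q (hk : 0 < k) : HasDerivAt q ((2 * k + 1) / (2 * q k)) k := by
  have hp : HasDerivAt (fun x : ℝ => x ^ 2 + x + 1) (2 * k + 1) k := by
    simpa using ((hasDerivAt_pow 2 k).add (hasDerivAt_id' k)).add_const 1
  exact hp.sqrt (by positivity)

lemma hasDerivAt_log_q_sub_one_sub_log_q_add_one (hk : 0 < k) :
    HasDerivAt (fun x => log (q x - 1) - log (q x + 1))
      ((2 * k + 1) / (q k * (k * (k + 1)))) k := by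
  have h1 := one_lt_q hk
  have h := ((hasDerivAt_q hk).sub_const 1).log (by linarith) |>.sub
    (((hasDerivAt_q hk).add_const 1).log (by linarith))
  refine h.congr_deriv ?_
  have hq := q_pos hk
  have : q k - 1 ≠ 0 := by linarith
  have : q k + 1 ≠ 0 := by linarith
  field_simp
  linear_combination (-2) * q_sq hk

lemma hasDerivAt_log_q_add_sub_log_q_sub (hk : 0 < k) :
    HasDerivAt (fun x => log (q x + x) - log (q x - x)) ((k + 2) / (q k * (k + 1))) k := by
  have h1 := lt_q hk
  have hadd : HasDerivAt (fun x => q x + x) _ k := (hasDerivAt_q hk).add (hasDerivAt_id' k)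
  have hsub : HasDerivAt (fun x => q x - x) _ k := (hasDerivAt_q hk).sub (hasDerivAt_id' k)
  have h := (hadd.log (by linarith)).sub (hsub.log (by linarith))
  refine h.congr_deriv ?_
  have hq := q_pos hk
  have : q k + k ≠ 0 := by linarith
  have : q k - k ≠ 0 := by linarith
  field_simp
  linear_combination (2 * k) * q_sq hk

lemma hasDerivAt_logRatio (hk : 0 < k) :
    HasDerivAt logRatio (log (q k - 1) - log (q k + 1) + 3 / q k) k := by
  refine ((hasDerivAt_id' k).mul (hasDerivAt_log_q_sub_one_sub_log_q_add_one hk)).add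
    (hasDerivAt_log_q_add_sub_log_q_sub hk) |>.congr_deriv ?_
  have hq := q_pos hk
  field_simp
  ring

lemma strictMonoOn_logRatio : StrictMonoOn logRatio (Set.Ici 1) := by
  refine strictMonoOn_of_deriv_pos (convex_Ici 1) (fun x hx => ?_) (fun x hx => ?_)
  · exact (hasDerivAt_logRatio (zero_lt_one.trans_le hx)).continuousAt.continuousWithinAt
  · rw [interior_Ici, Set.mem_Ioi] at hx
    have hx0 : 0 < x := by linarith
    rw [(hasDerivAt_logRatio hx0).deriv]
    have := log_add_one_sub_log_sub_one_lt (q_pos hx0) (by nlinarith [q_sq hx0])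
    linarith

lemma ratio_eq_exp_logRatio (hk : 0 < k) :
    ((q k - 1) / (q k + 1)) ^ k * (q k + k) / (q k - k) = exp (logRatio k) := by
  have h1 := one_lt_q hk
  have h2 := lt_q hk
  rw [rpow_def_of_pos (div_pos (by linarith) (by linarith)), logRatio,
    log_div (by linarith) (by linarith), exp_add, exp_sub, exp_log (by linarith),
    exp_log (by linarith), mul_comm (log _ - _) k, mul_div_assoc]

end InvariantRatio

open InvariantRatio in
theorem invariant_ratio_increasing (f : ℝ → ℝ)
    (hf : ∀ k : ℝ, f k =
      ((Real.sqrt (k^2 + k + 1) - 1) / (Real.sqrt (k^2 + k + 1) + 1)) ^ k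
        * (Real.sqrt (k^2 + k + 1) + k) / (Real.sqrt (k^2 + k + 1) - k)) :
    f 1 = 1 ∧ StrictMonoOn f (Set.Ioi (1 : ℝ)) ∧ ∀ k : ℝ, 1 < k → 1 < f k := by
  have hf1 : f 1 = 1 := by
    have hs : 1 < √3 := by simpa using sqrt_lt_sqrt zero_le_one (by norm_num : (1 : ℝ) < 3)
    rw [hf, show (1 : ℝ) ^ 2 + 1 + 1 = 3 by norm_num, rpow_one,
      div_mul_cancel₀ _ (by linarith), div_self (by linarith)]
  have hmono : StrictMonoOn f (Set.Ici 1) :=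
    (exp_strictMono.comp_strictMonoOn strictMonoOn_logRatio).congr fun k hk =>
      ((hf k).trans (ratio_eq_exp_logRatio (zero_lt_one.trans_le hk))).symm
  refine ⟨hf1, hmono.mono Set.Ioi_subset_Ici_self, fun k hk => ?_⟩
  simpa [hf1] using hmono Set.self_mem_Ici hk.le hk
end
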